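/- arXiv:1301.5875 — 2 statements merged into one kernel-verified Lean document; each statement's English description precedes it below -/
import Mathlib

section
/- The sequence ε_m defined by ε_0 = ε ∈ (0,1) and ε_{m+1} = (ε_m/2^(n-1))·(2^(n-1) + 1 − ε_m) is monotone increasing and bounded above by 1. -/
/-! The map `x ↦ x / c * (c + 1 - x)` with `c = 2 ^ (n - 1) ≥ 1` sends `[0, 1]` into itself and
moves every point of `[0, 1]` to the right: `f x - x = x (1 - x) / c ≥ 0` and
`1 - f x = (1 - x) (c - x) / c ≥ 0`. Hence the orbit of `ε` stays in `[0, 1]` and increases. -/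

open Set

noncomputable section

def bsMap (c x : ℝ) : ℝ := x / c * (c + 1 - x)

variable {c x : ℝ}

theorem self_le_bsMap (hc : 0 < c) (hx : x ∈ Icc 0 1) : x ≤ bsMap c x := by
  rw [bsMap, div_mul_eq_mul_div, le_div_iff₀ hc]
  nlinarith [mul_nonneg hx.1 (sub_nonneg.2 hx.2)]

theorem bsMap_le_one (hc : 1 ≤ c) (hx : x ≤ 1) : bsMap c x ≤ 1 := by
  rw [bsMap, div_mul_eq_mul_div, div_le_one (by linarith)]
  nlinarith [mul_nonneg (sub_nonneg.2 hx) (sub_nonneg.2 (hx.trans hc))]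

theorem mapsTo_bsMap_Icc (hc : 1 ≤ c) : MapsTo (bsMap c) (Icc 0 1) (Icc 0 1) := fun _ hx =>
  ⟨hx.1.trans (self_le_bsMap (by linarith) hx), bsMap_le_one hc hx.2⟩

end

theorem bs_iterates_monotone_bounded_general (n : ℕ) (ε : ℝ) (h0 : 0 < ε) (h1 : ε < 1)
    (e : ℕ → ℝ) (he0 : e 0 = ε)
    (hrec : ∀ m, e (m + 1) = e m / 2 ^ (n - 1) * (2 ^ (n - 1) + 1 - e m)) :
    Monotone e ∧ ∀ m, e m ≤ 1 := by
  have hc : (1 : ℝ) ≤ 2 ^ (n - 1) := one_le_pow₀ one_le_two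
  have hmem : ∀ m, e m ∈ Icc (0 : ℝ) 1 := by
    intro m
    induction m with
    | zero => exact he0 ▸ ⟨h0.le, h1.le⟩
    | succ m ih => exact hrec m ▸ mapsTo_bsMap_Icc hc ih
  refine ⟨monotone_nat_of_le_succ fun m => ?_, fun m => (hmem m).2⟩
  exact hrec m ▸ self_le_bsMap (by linarith) (hmem m)

theorem bs_iterates_monotone_bounded (n : ℕ) (hn : 2 ≤ n) (ε : ℝ) (h0 : 0 < ε) (h1 : ε < 1)
    (e : ℕ → ℝ) (he0 : e 0 = ε)
    (hrec : ∀ m, e (m + 1) = e m / 2 ^ (n - 1) * (2 ^ (n - 1) + 1 - e m)) :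
    Monotone e ∧ ∀ m, e m ≤ 1 :=
  bs_iterates_monotone_bounded_general n ε h0 h1 e he0 hrec
end

section
/- Let n ≥ 2 and 0 < ε < 1. Applying the generalized BS protocol to two independent copies of P_{n,ε} = ε·P_n^PR + (1−ε)·P_n^c produces the box P_{n,ε'} with ε' = (ε/2^{n−1})·(2^{n−1} + 1 − ε). -/
/-- The n-partite PR box: uniform over outputs with XOR of outputs = AND of inputs. -/
noncomputable def PRbox (n : ℕ) (a x : Fin n → ZMod 2) : ℝ :=
  if (∑ i, a i) = (∏ i, x i) then (2:ℝ) ^ (-((n:ℤ) - 1)) else 0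

/-- The even-parity box: uniform over outputs with XOR of outputs = 0. -/
noncomputable def Cbox (n : ℕ) (a x : Fin n → ZMod 2) : ℝ :=
  if (∑ i, a i) = 0 then (2:ℝ) ^ (-((n:ℤ) - 1)) else 0

/-- The correlated non-local box P_{n,ε} = ε·P^PR + (1-ε)·P^c. -/
noncomputable def CNLbox (n : ℕ) (ε : ℝ) (a x : Fin n → ZMod 2) : ℝ :=
  ε * PRbox n a x + (1 - ε) * Cbox n a x

/-- The generalized BS wiring: y_i = x_i·(1 - a_i), c_i = a_i ⊕ b_i. -/
noncomputable def wire (n : ℕ) (P Q : (Fin n → ZMod 2) → (Fin n → ZMod 2) → ℝ)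
    (c x : Fin n → ZMod 2) : ℝ :=
  ∑ a : Fin n → ZMod 2, P a x * Q (fun i => c i + a i) (fun i => x i * (1 + a i))

open Finset

/-! The wiring is bilinear, so it is determined by its values on the four pairs of extreme boxes.
Since `∏ i, x i * (1 + a i)` vanishes unless `a = 0`, the second box sees the product of the
inputs only when the first one outputs `0`; hence `PRbox` in the second slot acts like `Cbox`
except for the term `a = 0` (`wire_PRbox`). With `Cbox` in the second slot the output parity
`∑ c` equals `∑ a`, and each parity class of outputs `a` has `2 ^ (n - 1)` elements, so every
box depending only on the parity of its outputs is reproduced. Expanding the product of the two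
mixtures gives `ε' = ε + ε (1 - ε) / 2 ^ (n - 1)`. -/

section

variable {n : ℕ}

theorem sum_ite_sum_eq (hn : 0 < n) (t : ZMod 2) (r : ℝ) :
    ∑ a : Fin n → ZMod 2, (if ∑ i, a i = t then r else 0) = 2 ^ (n - 1) * r := by
  obtain ⟨m, rfl⟩ := Nat.exists_eq_add_one_of_ne_zero hn.ne'
  rw [← (Fin.consEquiv fun _ => ZMod 2).sum_comp, Fintype.sum_prod_type_right]
  simp only [Fin.consEquiv_apply, Fin.sum_univ_succ, Fin.cons_zero, Fin.cons_succ,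
    ← eq_sub_iff_add_eq, Finset.sum_ite_eq', mem_univ, if_true, sum_const, card_univ,
    Fintype.card_pi, Fintype.card_fin, ZMod.card, prod_const, nsmul_eq_mul, Nat.add_sub_cancel]
  push_cast
  ring

theorem prod_mul_one_add_eq_zero {a : Fin n → ZMod 2} (ha : a ≠ 0) (x : Fin n → ZMod 2) :
    ∏ i, x i * (1 + a i) = 0 := by
  obtain ⟨i, hi : a i ≠ 0⟩ := Function.ne_iff.mp ha
  have h1 : 1 + a i = 0 := by
    generalize a i = u at hi
    revert u
    decide
  exact prod_eq_zero (mem_univ i) (by rw [h1, mul_zero])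

theorem zpow_neg_natCast_sub_one {K : Type*} [DivisionRing K] (a : K) (hn : 0 < n) :
    a ^ (-((n : ℤ) - 1)) = (a ^ (n - 1))⁻¹ := by
  rw [← zpow_natCast, ← zpow_neg, Nat.cast_sub hn, Nat.cast_one]

theorem wire_mix_left (P P' Q : (Fin n → ZMod 2) → (Fin n → ZMod 2) → ℝ) (α β : ℝ)
    (c x : Fin n → ZMod 2) :
    wire n (fun a x => α * P a x + β * P' a x) Q c x
      = α * wire n P Q c x + β * wire n P' Q c x := by
  simp only [wire, add_mul, sum_add_distrib, mul_sum, mul_assoc]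

theorem wire_mix_right (P Q Q' : (Fin n → ZMod 2) → (Fin n → ZMod 2) → ℝ) (α β : ℝ)
    (c x : Fin n → ZMod 2) :
    wire n P (fun a x => α * Q a x + β * Q' a x) c x
      = α * wire n P Q c x + β * wire n P Q' c x := by
  simp only [wire, mul_add, sum_add_distrib, mul_sum, mul_left_comm]

noncomputable def parityBox (n : ℕ) (f : (Fin n → ZMod 2) → ZMod 2) (a x : Fin n → ZMod 2) : ℝ :=
  if ∑ i, a i = f x then (2 : ℝ) ^ (-((n : ℤ) - 1)) else 0

theorem wire_parityBox_Cbox (hn : 0 < n) (f : (Fin n → ZMod 2) → ZMod 2) :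
    wire n (parityBox n f) (Cbox n) = parityBox n f := by
  funext c x
  simp only [wire, parityBox, Cbox, sum_add_distrib, CharTwo.add_eq_zero, ite_zero_mul_ite_zero]
  by_cases h : ∑ i, c i = f x
  · simp only [h, and_iff_left_of_imp (fun h' : _ = f x => h'.symm), if_true]
    rw [sum_ite_sum_eq hn, zpow_neg_natCast_sub_one _ hn]
    field_simp
  · simp only [h, if_false]
    refine sum_eq_zero fun a _ => if_neg ?_
    rintro ⟨ha, hc⟩
    exact h (hc.trans ha)

theorem wire_PRbox (P : (Fin n → ZMod 2) → (Fin n → ZMod 2) → ℝ) (c x : Fin n → ZMod 2) :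
    wire n P (PRbox n) c x = wire n P (Cbox n) c x + P 0 x * (PRbox n c x - Cbox n c x) := by
  rw [← sub_eq_iff_eq_add', wire, wire, ← sum_sub_distrib]
  simp_rw [← mul_sub]
  rw [Fintype.sum_eq_single 0]
  · simp
  · intro a ha
    simp [PRbox, Cbox, prod_mul_one_add_eq_zero ha]

theorem wire_PRbox_Cbox (hn : 0 < n) : wire n (PRbox n) (Cbox n) = PRbox n :=
  wire_parityBox_Cbox hn fun x => ∏ i, x i

theorem wire_Cbox_Cbox (hn : 0 < n) : wire n (Cbox n) (Cbox n) = Cbox n :=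
  wire_parityBox_Cbox hn fun _ => 0

theorem wire_PRbox_PRbox (hn : 0 < n) (c x : Fin n → ZMod 2) :
    wire n (PRbox n) (PRbox n) c x = PRbox n c x := by
  rw [wire_PRbox, wire_PRbox_Cbox hn, add_eq_left]
  by_cases hx : ∏ i, x i = 0
  · simp [PRbox, Cbox, hx]
  · simp [PRbox, Ne.symm hx]

theorem wire_Cbox_PRbox (hn : 0 < n) (c x : Fin n → ZMod 2) :
    wire n (Cbox n) (PRbox n) c x
      = (2 ^ (n - 1))⁻¹ * PRbox n c x + (1 - (2 ^ (n - 1))⁻¹) * Cbox n c x := by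
  rw [wire_PRbox, wire_Cbox_Cbox hn]
  simp only [Cbox, Pi.zero_apply, sum_const_zero, if_true, zpow_neg_natCast_sub_one _ hn]
  ring

end

theorem bs_protocol_on_correlated_boxes_general (n : ℕ) (hn : 2 ≤ n)
    (ε : ℝ) :
    ∀ c x, wire n (CNLbox n ε) (CNLbox n ε) c x
      = CNLbox n (ε / 2 ^ (n - 1) * (2 ^ (n - 1) + 1 - ε)) c x := by
  intro c x
  have hpos : 0 < n := by omega
  rw [show CNLbox n ε = fun a x => ε * PRbox n a x + (1 - ε) * Cbox n a x from rfl,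
    wire_mix_left, wire_mix_right, wire_mix_right, wire_PRbox_PRbox hpos, wire_PRbox_Cbox hpos,
    wire_Cbox_PRbox hpos, wire_Cbox_Cbox hpos, CNLbox]
  field_simp
  ring

theorem bs_protocol_on_correlated_boxes (n : ℕ) (hn : 2 ≤ n)
    (ε : ℝ) (h0 : 0 < ε) (h1 : ε < 1) :
    ∀ c x, wire n (CNLbox n ε) (CNLbox n ε) c x
      = CNLbox n (ε / 2 ^ (n - 1) * (2 ^ (n - 1) + 1 - ε)) c x :=
  bs_protocol_on_correlated_boxes_general n hn ε
end
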